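/- arXiv:2208.09721 — 2 statements merged into one kernel-verified Lean document; each statement's English description precedes it below -/
import Mathlib

section
/- Let κ, N be relatively prime integers with 0 < κ < N, and let a, b be positive integers. Then the polynomial b·[t]_a ∈ ℤ[t] is an N-constant (i.e. every coefficient of b·[t]_a − b·[t−κ]_a is divisible by N) if and only if ab ≡ 0 (mod N). Moreover, b·[t−κ]_a = b·[t]_a − abκ·[t−κ]_{a−1}. -/
/-- The "string" (Pochhammer-type) polynomial `[x]_m = ∏_{i=1}^m (x - (i-1)κ)`. -/
noncomputable def str {R : Type*} [CommRing R] (κ : ℤ) (m : ℕ) (x : R) : R :=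
  ∏ i ∈ Finset.range m, (x - (((i : ℤ) * κ : ℤ) : R))

/-- `f ∈ ℤ[t]` is an `M`-constant: every coefficient of `f(t) − f(t−κ)` is divisible by `M`. -/
def MConst (κ M : ℤ) (f : Polynomial ℤ) : Prop :=
  ∀ j : ℕ, M ∣ (f - f.comp (Polynomial.X - Polynomial.C κ)).coeff j

open Polynomial Finset

private lemma str_eq (κ : ℤ) (m : ℕ) (p : Polynomial ℤ) :
    str κ m p = ∏ i ∈ range m, (p - C ((i : ℤ) * κ)) := by
  unfold str
  refine Finset.prod_congr rfl fun i _ => ?_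
  simp

private lemma str_shift (κ : ℤ) (m : ℕ) :
    str κ m ((X : Polynomial ℤ) - C κ) =
      ∏ i ∈ range m, ((X : Polynomial ℤ) - C (((i : ℤ) + 1) * κ)) := by
  rw [str_eq]
  refine Finset.prod_congr rfl fun i _ => ?_
  rw [add_mul, one_mul, map_add]
  ring

private lemma Pmonic (κ : ℤ) (m : ℕ) :
    (∏ i ∈ range m, ((X : Polynomial ℤ) - C (((i : ℤ) + 1) * κ))).Monic :=
  monic_prod_of_monic _ _ fun i _ => monic_X_sub_C _

private lemma Pdeg (κ : ℤ) (m : ℕ) :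
    (∏ i ∈ range m, ((X : Polynomial ℤ) - C (((i : ℤ) + 1) * κ))).natDegree = m := by
  rw [Polynomial.natDegree_prod_of_monic _ _ fun i _ => monic_X_sub_C _]
  rw [Finset.sum_congr rfl fun i _ => Polynomial.natDegree_X_sub_C _]
  simp

/-- for coprime `0 < κ < N` and positive integers `a, b`, the polynomial
`b·[t]_a` is an `N`-constant iff `ab ≡ 0 (mod N)`; moreover
`b·[t−κ]_a = b·[t]_a − abκ·[t−κ]_{a−1}`. -/
theorem stmt14 (κ N : ℤ) (hκ : 0 < κ) (hκN : κ < N) (hcop : Int.gcd κ N = 1)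
    (a b : ℕ) (ha : 0 < a) (hb : 0 < b) :
    (MConst κ N (Polynomial.C (b : ℤ) * str κ a Polynomial.X) ↔ N ∣ (a : ℤ) * b) ∧
    Polynomial.C (b : ℤ) * str κ a (Polynomial.X - Polynomial.C κ) =
      Polynomial.C (b : ℤ) * str κ a Polynomial.X -
        Polynomial.C ((a : ℤ) * b * κ) * str κ (a - 1) (Polynomial.X - Polynomial.C κ) := by
  obtain ⟨n, rfl⟩ : ∃ n, a = n + 1 := ⟨a - 1, (Nat.succ_pred_eq_of_pos ha).symm⟩
  simp only [Nat.add_sub_cancel]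
  set P : Polynomial ℤ := ∏ i ∈ range n, ((X : Polynomial ℤ) - C (((i : ℤ) + 1) * κ)) with hP
  have hA : str κ (n + 1) ((X : Polynomial ℤ) - C κ) = P * (X - C (((n : ℤ) + 1) * κ)) := by
    rw [str_shift, Finset.prod_range_succ]
  have hB : str κ (n + 1) (X : Polynomial ℤ) = P * X := by
    rw [str_eq, Finset.prod_range_succ']
    push_cast
    simp [hP, mul_comm]
  have hC : str κ n ((X : Polynomial ℤ) - C κ) = P := str_shift κ n
  have key : Polynomial.C (b : ℤ) * str κ (n + 1) (Polynomial.X - Polynomial.C κ) =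
      Polynomial.C (b : ℤ) * str κ (n + 1) Polynomial.X -
        Polynomial.C (((n : ℕ) + 1 : ℤ) * b * κ) * str κ n (Polynomial.X - Polynomial.C κ) := by
    rw [hA, hB, hC]
    push_cast
    simp only [map_mul, map_add, map_one]
    ring
  refine ⟨?_, by push_cast at key ⊢; exact key⟩
  have hcomp : (C (b : ℤ) * str κ (n + 1) X).comp (X - C κ)
      = C (b : ℤ) * str κ (n + 1) ((X : Polynomial ℤ) - C κ) := by
    rw [str_eq, str_eq]
    simp [Polynomial.mul_comp, Polynomial.prod_comp, Polynomial.sub_comp]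
  have hdiff : C (b : ℤ) * str κ (n + 1) X
      - (C (b : ℤ) * str κ (n + 1) X).comp (X - C κ)
      = C (((n : ℕ) + 1 : ℤ) * b * κ) * P := by
    rw [hcomp, key, hC]
    ring
  constructor
  · intro h
    have := h n
    rw [hdiff, Polynomial.coeff_C_mul] at this
    have hco : P.coeff n = 1 := by
      have := (Pmonic κ n).coeff_natDegree
      rwa [Pdeg] at this
    rw [hco, mul_one] at this
    have hNκ : IsCoprime N κ := by
      rw [Int.isCoprime_iff_gcd_eq_one, Int.gcd_comm]; exact hcop
    have : N ∣ ((n : ℕ) + 1 : ℤ) * b * κ := this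
    have := hNκ.dvd_of_dvd_mul_right this
    push_cast at this ⊢
    convert this using 2
  · intro h j
    rw [hdiff, Polynomial.coeff_C_mul]
    push_cast at h
    exact Dvd.dvd.mul_right (Dvd.dvd.mul_right h κ) _
end

section
/- Let κ, N be relatively prime integers with 0 < κ < N. A polynomial f ∈ ℤ[t] satisfies f(t) − f(t−κ) ≡ 0 (mod N) (coefficientwise) if and only if f lies in the ℤ-submodule of ℤ[t] generated by the polynomials a·[t]_b over all integers a ≥ 1, b ≥ 0 with ab ≡ 0 (mod N). Equivalently, writing f = Σ_m c_m·[t]_m in the string basis, f is an N-constant if and only if N divides m·c_m for every m. -/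
open Polynomial Finset

noncomputable def strP (κ : ℤ) (m : ℕ) : ℤ[X] := ∏ i ∈ range m, (X - C ((i:ℤ)*κ))

lemma strX (κ : ℤ) (m : ℕ) : str κ m (X : ℤ[X]) = strP κ m := by
  unfold str strP
  exact prod_congr rfl fun i _ => by rw [← C_eq_intCast]; norm_cast

lemma strP_comp (κ : ℤ) (m : ℕ) :
    (strP κ m).comp (X - C κ) = ∏ i ∈ range m, (X - C (((i:ℤ)+1)*κ)) := by
  unfold strP
  rw [Polynomial.prod_comp]
  refine prod_congr rfl fun i _ => ?_
  rw [sub_comp, X_comp, C_comp, sub_sub, ← C_add]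
  ring_nf

lemma strP_monic (κ : ℤ) (m : ℕ) : (strP κ m).Monic :=
  monic_prod_of_monic _ _ fun i _ => monic_X_sub_C _

lemma strP_natDegree (κ : ℤ) (m : ℕ) : (strP κ m).natDegree = m := by
  unfold strP
  rw [natDegree_prod_of_monic _ _ fun i _ => monic_X_sub_C _]
  simp only [natDegree_X_sub_C, sum_const, card_range, smul_eq_mul, mul_one]

lemma keyrec (κ : ℤ) (m : ℕ) :
    strP κ (m+1) - (strP κ (m+1)).comp (X - C κ)
      = C (((m:ℤ)+1)*κ) * ((strP κ m).comp (X - C κ)) := by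
  rw [strP_comp, strP_comp, prod_range_succ]
  unfold strP
  rw [prod_range_succ']
  push_cast
  simp only [zero_mul, C_0, sub_zero]
  ring

lemma dvd_coeff_comp (N : ℤ) (h p : ℤ[X]) (hh : ∀ j, N ∣ h.coeff j) :
    ∀ j, N ∣ (h.comp p).coeff j := by
  intro j
  rw [comp_eq_sum_left, Polynomial.sum, finset_sum_coeff]
  refine Finset.dvd_sum fun i _ => ?_
  rw [coeff_C_mul]
  exact Dvd.dvd.mul_right (hh i) _

lemma dvd_coeff_comp_iff (N : ℤ) (κ : ℤ) (h : ℤ[X]) :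
    (∀ j, N ∣ (h.comp (X - C κ)).coeff j) ↔ (∀ j, N ∣ h.coeff j) := by
  constructor
  · intro H
    have := dvd_coeff_comp N _ (X + C κ) H
    rwa [comp_assoc, sub_comp, X_comp, C_comp, add_sub_cancel_right, comp_X] at this
  · exact dvd_coeff_comp N h _

lemma indep (κ N : ℤ) (k : ℕ) (a : ℕ → ℤ)
    (h : ∀ j, N ∣ (∑ m ∈ range k, C (a m) * strP κ m).coeff j) :
    ∀ m < k, N ∣ a m := by
  induction k with
  | zero => omega
  | succ k ih =>
    have hak : N ∣ a k := by
      have h1 : (strP κ k).coeff k = 1 := by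
        simpa [strP_natDegree] using (strP_monic κ k).coeff_natDegree
      have hk := h k
      rw [finset_sum_coeff, sum_range_succ] at hk
      rw [sum_eq_zero (fun m hm => by
        rw [coeff_C_mul, coeff_eq_zero_of_natDegree_lt
          (by rw [strP_natDegree]; exact mem_range.mp hm), mul_zero]), zero_add,
        coeff_C_mul, h1, mul_one] at hk
      exact hk
    have h' : ∀ j, N ∣ (∑ m ∈ range k, C (a m) * strP κ m).coeff j := by
      intro j
      have : (∑ m ∈ range k, C (a m) * strP κ m).coeff j
          = (∑ m ∈ range (k+1), C (a m) * strP κ m).coeff j - a k * (strP κ k).coeff j := by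
        rw [sum_range_succ, coeff_add, coeff_C_mul]; ring
      rw [this]
      exact dvd_sub (h j) (hak.mul_right _)
    intro m hm
    rcases Nat.lt_succ_iff_lt_or_eq.mp hm with h1 | h2
    · exact ih h' m h1
    · rwa [h2]

lemma diff_eq (κ : ℤ) (d : ℕ) (c : ℕ → ℤ) :
    (∑ m ∈ range (d+1), C (c m) * strP κ m)
      - (∑ m ∈ range (d+1), C (c m) * strP κ m).comp (X - C κ)
    = (∑ i ∈ range d, C (c (i+1) * (((i:ℤ)+1) * κ)) * strP κ i).comp (X - C κ) := by
  rw [Polynomial.sum_comp, Polynomial.sum_comp, ← sum_sub_distrib]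
  have hterm : ∀ m ∈ range (d+1), C (c m) * strP κ m - (C (c m) * strP κ m).comp (X - C κ)
      = C (c m) * (strP κ m - (strP κ m).comp (X - C κ)) := by
    intro m _
    rw [mul_comp, C_comp, mul_sub]
  rw [sum_congr rfl hterm, sum_range_succ']
  have h0 : C (c 0) * (strP κ 0 - (strP κ 0).comp (X - C κ)) = 0 := by
    simp [strP]
  rw [h0, add_zero]
  refine sum_congr rfl fun i _ => ?_
  rw [keyrec, mul_comp, C_comp, ← mul_assoc, ← C_mul]

/-- for coprime `0 < κ < N`, a polynomial `f ∈ ℤ[t]` is an `N`-constant iff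
it lies in the ℤ-submodule generated by the polynomials `a·[t]_b` (`a ≥ 1`, `b ≥ 0`,
`ab ≡ 0 (mod N)`); equivalently, writing `f = Σ_m c_m·[t]_m` in the string basis,
`f` is an `N`-constant iff `N ∣ m·c_m` for all `m`. -/
theorem stmt15 (κ N : ℤ) (hκ : 0 < κ) (hκN : κ < N) (hcop : Int.gcd κ N = 1)
    (f : Polynomial ℤ) (d : ℕ) (c : ℕ → ℤ)
    (hc0 : ∀ m, d < m → c m = 0)
    (hf : f = ∑ m ∈ Finset.range (d + 1), Polynomial.C (c m) * str κ m Polynomial.X) :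
    (MConst κ N f ↔
      f ∈ Submodule.span ℤ
        {p : Polynomial ℤ | ∃ (a : ℤ) (b : ℕ), 1 ≤ a ∧ N ∣ a * b ∧
          p = Polynomial.C a * str κ b Polynomial.X}) ∧
    (MConst κ N f ↔ ∀ m : ℕ, N ∣ (m : ℤ) * c m) := by
  have hN : 0 < N := hκ.trans hκN
  have hNκ : IsCoprime N κ := (Int.isCoprime_iff_gcd_eq_one.mpr hcop).symm
  have hfP : f = ∑ m ∈ range (d+1), C (c m) * strP κ m := by
    rw [hf]; exact sum_congr rfl fun m _ => by rw [strX]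
  set g : ℤ[X] := ∑ i ∈ range d, C (c (i+1) * (((i:ℤ)+1) * κ)) * strP κ i with hg
  have hdiff : f - f.comp (X - C κ) = g.comp (X - C κ) := by
    rw [hfP]; exact diff_eq κ d c
  have hMg : MConst κ N f ↔ ∀ j, N ∣ g.coeff j := by
    unfold MConst
    rw [hdiff]
    exact dvd_coeff_comp_iff N κ g
  have hMc : MConst κ N f ↔ ∀ i, i < d → N ∣ c (i+1) * (((i:ℤ)+1) * κ) := by
    rw [hMg]
    constructor
    · intro H i hi
      exact indep κ N d _ H i hi
    · intro H j
      rw [hg, finset_sum_coeff]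
      exact dvd_sum fun i hi => by
        rw [coeff_C_mul]; exact (H i (mem_range.mp hi)).mul_right _
  have hiff2 : MConst κ N f ↔ ∀ m : ℕ, N ∣ (m:ℤ) * c m := by
    rw [hMc]
    constructor
    · intro H m
      match m with
      | 0 => simp
      | (i+1) =>
        by_cases hi : i < d
        · have h1 := H i hi
          rw [show c (i+1) * (((i:ℤ)+1)*κ) = (((i:ℤ)+1) * c (i+1)) * κ from by ring] at h1
          have h2 := hNκ.dvd_of_dvd_mul_right h1
          push_cast
          exact h2
        · have : c (i+1) = 0 := hc0 _ (by omega)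
          simp [this]
    · intro H i hi
      have h2 : N ∣ ((i:ℤ)+1) * c (i+1) := by
        have := H (i+1); push_cast at this; exact this
      rw [show c (i+1) * (((i:ℤ)+1)*κ) = (((i:ℤ)+1) * c (i+1)) * κ from by ring]
      exact h2.mul_right κ
  refine ⟨⟨fun h => ?_, fun h => ?_⟩, hiff2⟩
  · -- MConst → span
    have H := hiff2.mp h
    rw [hf]
    refine Submodule.sum_mem _ fun m _ => ?_
    set g0 : ℤ := (Int.gcd N (m:ℤ) : ℤ) with hg0
    have hg0pos : 0 < g0 := by
      rw [hg0]
      exact_mod_cast Int.gcd_pos_of_ne_zero_left (m:ℤ) hN.ne'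
    obtain ⟨a, ha⟩ : g0 ∣ N := Int.gcd_dvd_left N (m:ℤ)
    obtain ⟨m', hm'⟩ : g0 ∣ (m:ℤ) := Int.gcd_dvd_right N (m:ℤ)
    have ha1 : 1 ≤ a := by nlinarith
    have hNam : N ∣ a * (m:ℤ) := ⟨m', by rw [ha, hm']; ring⟩
    have hcop2 : IsCoprime a m' := by
      rw [Int.isCoprime_iff_gcd_eq_one]
      have hgd := Int.gcd_div_gcd_div_gcd (i := N) (j := (m:ℤ))
        (Int.gcd_pos_of_ne_zero_left (m:ℤ) hN.ne')
      rw [← hg0] at hgd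
      rwa [ha, hm', Int.mul_ediv_cancel_left _ hg0pos.ne',
        Int.mul_ediv_cancel_left _ hg0pos.ne'] at hgd
    have hadvd : a ∣ c m := by
      have h1 : N ∣ (m:ℤ) * c m := H m
      rw [ha, hm'] at h1
      have h2 : g0 * a ∣ g0 * (m' * c m) := by rwa [show g0 * m' * c m = g0 * (m' * c m) from by ring] at h1
      exact hcop2.dvd_of_dvd_mul_left ((mul_dvd_mul_iff_left hg0pos.ne').mp h2)
    obtain ⟨e, he⟩ := hadvd
    have heq : C (c m) * str κ m (X : ℤ[X]) = e • (C a * str κ m (X : ℤ[X])) := by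
      rw [he, zsmul_eq_mul, ← C_eq_intCast, ← mul_assoc, ← C_mul, mul_comm a e]
      norm_cast
    rw [heq]
    exact Submodule.smul_mem _ e (Submodule.subset_span ⟨a, m, ha1, hNam, rfl⟩)
  · -- span → MConst
    let S : Submodule ℤ ℤ[X] :=
      { carrier := {p | MConst κ N p}
        add_mem' := by
          intro p q hp hq j
          rw [add_comp, show p + q - (p.comp (X - C κ) + q.comp (X - C κ))
            = (p - p.comp (X - C κ)) + (q - q.comp (X - C κ)) from by ring, coeff_add]
          exact dvd_add (hp j) (hq j)
        zero_mem' := by intro j; simp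
        smul_mem' := by
          intro z p hp j
          rw [smul_comp, ← smul_sub, coeff_smul, smul_eq_mul]
          exact (hp j).mul_left z }
    have hle : Submodule.span ℤ
        {p : Polynomial ℤ | ∃ (a : ℤ) (b : ℕ), 1 ≤ a ∧ N ∣ a * b ∧
          p = Polynomial.C a * str κ b Polynomial.X} ≤ S := by
      rw [Submodule.span_le]
      rintro p ⟨a, b, _, hNab, rfl⟩
      intro j
      rw [strX]
      match b with
      | 0 =>
        simp [strP]
      | (b'+1) =>
        rw [mul_comp, C_comp, show C a * strP κ (b'+1) - C a * (strP κ (b'+1)).comp (X - C κ)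
          = C a * (strP κ (b'+1) - (strP κ (b'+1)).comp (X - C κ)) from by ring,
          keyrec, ← mul_assoc, ← C_mul, coeff_C_mul]
        have : N ∣ a * (((b':ℤ)+1) * κ) := by
          have : N ∣ a * ((b':ℤ)+1) := by push_cast at hNab; exact hNab
          rw [← mul_assoc]
          exact this.mul_right κ
        exact this.mul_right _
    exact hle h
end
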